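/- Let d be a squarefree positive integer with discriminant Δ_d > 4·15², let F = ℚ(√d), and let L be a positive definite classic quadratic 𝒪_F-lattice with quadratic map Q and associated bilinear form B. Let S = { v ∈ L : Q(v) ∈ ℤ and 1 ≤ Q(v) ≤ 15 } and let L₁ be the ℤ-submodule of L generated by S. Then B(L₁, L₁) ⊆ ℤ, i.e., B(x,y) is a rational integer for all x, y ∈ L₁. -/

import Mathlib

noncomputable section

/-- `Δ_d`: the discriminant of `ℚ(√d)` for squarefree `d > 1`. -/
def Delta (d : ℕ) : ℕ := if d % 4 = 1 then d else 4 * d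

/-- `ω_d`, viewed as a real number (with `√d > 0`). -/
def omegaR (d : ℕ) : ℝ := if d % 4 = 1 then (1 + Real.sqrt d) / 2 else Real.sqrt d

/-- The conjugate `ω̄_d`, viewed as a real number. -/
def omegaConjR (d : ℕ) : ℝ := if d % 4 = 1 then (1 - Real.sqrt d) / 2 else -Real.sqrt d

/-- `F = ℚ(√d)`, realized as an intermediate field of `ℝ/ℚ` via the embedding with `√d > 0`. -/
def Fd (d : ℕ) : IntermediateField ℚ ℝ := IntermediateField.adjoin ℚ {Real.sqrt d}

/-- The ring of integers `𝒪_F` of `F = ℚ(√d)`. -/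
abbrev Od (d : ℕ) := NumberField.RingOfIntegers (Fd d)

/-- An element of `F` is totally positive if its image under each of the
(two) real embeddings of `F` is positive. -/
def TotPos {d : ℕ} (x : Fd d) : Prop := ∀ σ : Fd d →ₐ[ℚ] ℝ, 0 < σ x

/-- The conjugate `x̄` of `x ∈ F = ℚ(√d)`, as a real number: `x̄ = tr(x) - x`. -/
def conjR {d : ℕ} (x : Fd d) : ℝ := ((Algebra.trace ℚ (Fd d) x : ℚ) : ℝ) - (x : ℝ)

/-- A (not necessarily classic) quadratic `𝒪_F`-lattice: a finitely generated
`𝒪_F`-module `L` with a quadratic map `Q : L → 𝒪_F` whose associated form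
`B(x,y) = (Q(x+y)-Q(x)-Q(y))/2` (with values a priori in `F`) is symmetric
bilinear and satisfies `B(x,x) = Q(x)`. -/
structure QuadLattice (d : ℕ) where
  carrier : Type
  [isAddCommGroup : AddCommGroup carrier]
  [isModule : Module (Od d) carrier]
  finite : Module.Finite (Od d) carrier
  Q : carrier → Od d
  B : carrier → carrier → Fd d
  B_symm : ∀ x y, B x y = B y x
  B_add_left : ∀ x y z, B (x + y) z = B x z + B y z
  B_smul_left : ∀ (a : Od d) (x y : carrier), B (a • x) y = (a : Fd d) * B x y
  B_self : ∀ x, B x x = (Q x : Fd d)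
  B_def : ∀ x y, 2 * B x y = (Q (x + y) : Fd d) - (Q x : Fd d) - (Q y : Fd d)

attribute [instance] QuadLattice.isAddCommGroup QuadLattice.isModule

namespace QuadLattice

variable {d : ℕ} (L : QuadLattice d)

/-- `L` is classic if the bilinear form takes values in `𝒪_F`. -/
def IsClassic : Prop := ∀ x y, L.B x y ∈ integralClosure ℤ (Fd d)

/-- `L` is positive definite if `Q(x)` is totally positive for all `x ≠ 0`. -/
def PosDef : Prop := ∀ x : L.carrier, x ≠ 0 → TotPos (L.Q x : Fd d)

/-- `L` is universal if `Q(L) = 𝒪_F⁺ ∪ {0}`. -/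
def Universal : Prop :=
  (Set.range fun v => L.Q v) = {a : Od d | TotPos (a : Fd d)} ∪ {0}

end QuadLattice

/-!
If `Q v = m` and `Q w = n` are integers in `[1, 15]`, Cauchy–Schwarz in each real embedding `σ`
gives `σ (B v w) ^ 2 ≤ m n ≤ 15²`. An algebraic integer `β = a + b√d` of `ℚ(√d)` whose conjugates
lie in `[-15, 15]` is rational: otherwise `(β - β̄)² = 4b²d` is a nonzero integer of the form
`d k²` congruent to a square mod 4, hence at least `Δ_d > 4·15²`, while `|β - β̄| ≤ 30`.
So `B` is `ℤ`-valued on the generators of `L₁`, hence on `L₁` by bilinearity.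
-/

theorem Rat.exists_eq_intCast_of_isIntegral {q : ℚ} (h : IsIntegral ℤ (q : ℝ)) :
    ∃ n : ℤ, q = n := by
  rw [← eq_ratCast (algebraMap ℚ ℝ), isIntegral_algebraMap_iff (algebraMap ℚ ℝ).injective,
    IsIntegrallyClosed.isIntegral_iff] at h
  obtain ⟨n, hn⟩ := h
  exact ⟨n, by simp [← hn]⟩

theorem Rat.exists_eq_intCast_of_sq_mul_squarefree {d : ℕ} (hd : Squarefree d) {r : ℚ} {D : ℤ}
    (h : r ^ 2 * d = D) : ∃ k : ℤ, r = k := by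
  have hden : ((r * d) ^ 2).den = 1 := by
    rw [show (r * d) ^ 2 = ((D * d : ℤ) : ℚ) by push_cast; rw [← h]; ring]
    exact Rat.den_intCast _
  rw [Rat.den_pow, Nat.pow_eq_one, or_iff_left two_ne_zero, Rat.den_eq_one_iff] at hden
  set s := (r * d).num
  have hsq : s ^ 2 = D * d := by exact_mod_cast (show (s : ℚ) ^ 2 = D * d by rw [hden, ← h]; ring)
  obtain ⟨k, hk⟩ := ((Int.squarefree_natCast.mpr hd).dvd_pow_iff_dvd two_ne_zero).mp
    (Dvd.intro_left _ hsq.symm)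
  refine ⟨k, mul_right_cancel₀ (Nat.cast_ne_zero.mpr hd.ne_zero : (d : ℚ) ≠ 0) ?_⟩
  rw [← hden, hk]
  push_cast
  ring

theorem mod_four_eq_one_of_sq_sub_four_mul {d : ℕ} (hd : Squarefree d) {t m k : ℤ}
    (h : t ^ 2 - 4 * m = d * k ^ 2) (hk : Odd k) : d % 4 = 1 := by
  have hmod : (t : ZMod 4) ^ 2 = d * (k : ZMod 4) ^ 2 := by
    have := congrArg (Int.cast : ℤ → ZMod 4) h
    push_cast at this
    rwa [show (4 : ZMod 4) = 0 from rfl, zero_mul, sub_zero] at this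
  have hk2 : (k : ZMod 4) ^ 2 = 1 := by
    obtain ⟨j, rfl⟩ := hk
    rw [← Int.cast_pow, show (2 * j + 1) ^ 2 = 4 * (j ^ 2 + j) + 1 by ring]
    push_cast
    rw [show (4 : ZMod 4) = 0 from rfl, zero_mul, zero_add]
  have hsquares : ∀ t k e : ZMod 4, t ^ 2 = e * k ^ 2 → k ^ 2 = 1 → e = 0 ∨ e = 1 := by decide
  rcases hsquares _ _ _ hmod hk2 with h0 | h1
  · have h4 : 2 * 2 ∣ d := (ZMod.natCast_eq_zero_iff d 4).mp h0
    exact absurd (Nat.isUnit_iff.mp (hd 2 h4)) (by norm_num)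
  · exact (ZMod.natCast_eq_natCast_iff' d 1 4).mp (by simpa using h1)

theorem Delta_le_mul_sq {d : ℕ} (hd : Squarefree d) {t m k : ℤ}
    (h : t ^ 2 - 4 * m = d * k ^ 2) (hk : k ≠ 0) : (Delta d : ℤ) ≤ d * k ^ 2 := by
  have hk2 : 0 < k ^ 2 := by positivity
  rcases Int.even_or_odd k with ⟨j, rfl⟩ | hodd
  · have hj : j ≠ 0 := by omega
    have hj2 : 0 < j ^ 2 := by positivity
    have hle : Delta d ≤ 4 * d := by unfold Delta; split_ifs <;> omega
    calc (Delta d : ℤ) ≤ 4 * d := by exact_mod_cast hle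
      _ ≤ d * (j + j) ^ 2 := by nlinarith
  · rw [Delta, if_pos (mod_four_eq_one_of_sq_sub_four_mul hd h hodd)]
    nlinarith

open Polynomial

namespace Fd

variable {d : ℕ}

theorem irrational_sqrt (hd : Squarefree d) (hd1 : 1 < d) : Irrational √(d : ℝ) := by
  rw [irrational_sqrt_natCast_iff]
  rintro ⟨r, hr⟩
  have := Nat.isUnit_iff.mp (hd r (by rw [hr]))
  subst this
  omega

theorem minpoly_sqrt (hd : Squarefree d) (hd1 : 1 < d) :
    minpoly ℚ √(d : ℝ) = X ^ 2 - C (d : ℚ) := by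
  refine (minpoly.eq_of_irreducible_of_monic ?_ ?_ (monic_X_pow_sub_C _ two_ne_zero)).symm
  · refine (X_pow_sub_C_irreducible_iff_of_prime Nat.prime_two).mpr fun q hq => ?_
    refine irrational_sqrt hd hd1 ⟨|q|, ?_⟩
    rw [Rat.cast_abs, ← Real.sqrt_sq_eq_abs, ← Rat.cast_pow, hq, Rat.cast_natCast]
  · simp [Real.sq_sqrt (Nat.cast_nonneg d)]

theorem isIntegral_sqrt : IsIntegral ℚ √(d : ℝ) :=
  ⟨X ^ 2 - C (d : ℚ), monic_X_pow_sub_C _ two_ne_zero,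
    by simp [Real.sq_sqrt (Nat.cast_nonneg d)]⟩

variable (d) in
def powerBasis : PowerBasis ℚ (Fd d) := IntermediateField.adjoin.powerBasis isIntegral_sqrt

theorem coe_powerBasis_gen : ((powerBasis d).gen : ℝ) = √(d : ℝ) := rfl

theorem minpoly_powerBasis_gen (hd : Squarefree d) (hd1 : 1 < d) :
    minpoly ℚ (powerBasis d).gen = X ^ 2 - C (d : ℚ) := by
  rw [← minpoly_sqrt hd hd1, ← coe_powerBasis_gen]
  exact (minpoly.algebraMap_eq (Fd d).val.injective _).symm

def conjEmb (hd : Squarefree d) (hd1 : 1 < d) : Fd d →ₐ[ℚ] ℝ :=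
  (powerBasis d).lift (-√(d : ℝ)) (by
    simp [minpoly_powerBasis_gen hd hd1, Real.sq_sqrt (Nat.cast_nonneg d)])

theorem exists_rat_coords (hd : Squarefree d) (hd1 : 1 < d) (x : Fd d) :
    ∃ a b : ℚ, (x : ℝ) = a + b * √(d : ℝ) ∧ conjEmb hd hd1 x = a - b * √(d : ℝ) := by
  obtain ⟨f, hf, rfl⟩ := (powerBasis d).exists_eq_aeval x
  have hdim : (powerBasis d).dim = 2 := by
    rw [← (powerBasis d).natDegree_minpoly, minpoly_powerBasis_gen hd hd1,
      natDegree_X_pow_sub_C]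
  obtain ⟨b, a, rfl⟩ := exists_eq_X_add_C_of_natDegree_le_one (by omega : f.natDegree ≤ 1)
  refine ⟨a, b, ?_, ?_⟩
  · simp [coe_powerBasis_gen, add_comm]
  · rw [← aeval_algHom_apply]
    simp [conjEmb]
    ring

theorem exists_eq_intCast_of_abs_le (hd : Squarefree d) (hd1 : 1 < d) {β : Fd d}
    (hβ : IsIntegral ℤ β) {c : ℝ} (hc : 4 * c ^ 2 < Delta d)
    (hσ : ∀ σ : Fd d →ₐ[ℚ] ℝ, |σ β| ≤ c) : ∃ n : ℤ, β = n := by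
  obtain ⟨a, b, hβa, hσa⟩ := exists_rat_coords hd hd1 β
  set σ := conjEmb hd hd1
  have hβℝ : IsIntegral ℤ (β : ℝ) := hβ.map (Fd d).val
  have hσβ : IsIntegral ℤ (σ β) := hβ.map σ
  obtain ⟨t, ht⟩ : ∃ t : ℤ, 2 * a = t := by
    refine Rat.exists_eq_intCast_of_isIntegral ?_
    rw [show ((2 * a : ℚ) : ℝ) = β + σ β by rw [hβa, hσa]; push_cast; ring]
    exact hβℝ.add hσβ
  obtain ⟨m, hm⟩ : ∃ m : ℤ, a ^ 2 - b ^ 2 * d = m := by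
    refine Rat.exists_eq_intCast_of_isIntegral ?_
    rw [show ((a ^ 2 - b ^ 2 * d : ℚ) : ℝ) = β * σ β by
      rw [hβa, hσa]; push_cast; ring_nf; rw [Real.sq_sqrt (Nat.cast_nonneg d)]]
    exact hβℝ.mul hσβ
  obtain ⟨k, hk⟩ : ∃ k : ℤ, 2 * b = k :=
    Rat.exists_eq_intCast_of_sq_mul_squarefree hd (D := t ^ 2 - 4 * m) (by
      push_cast; rw [← ht, ← hm]; ring)
  have hdisc : t ^ 2 - 4 * m = d * k ^ 2 := by
    have : (t : ℚ) ^ 2 - 4 * m = d * k ^ 2 := by rw [← ht, ← hm, ← hk]; ring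
    exact_mod_cast this
  have hk0 : k = 0 := by
    by_contra hk0
    have hΔ : ((Delta d : ℤ) : ℝ) ≤ d * k ^ 2 := by exact_mod_cast Delta_le_mul_sq hd hdisc hk0
    have hdiff : (d * k ^ 2 : ℝ) = ((β : ℝ) - σ β) ^ 2 := by
      rw [hβa, hσa, show (b : ℝ) = k / 2 by rw [← Rat.cast_intCast, ← hk]; push_cast; ring]
      ring_nf; rw [Real.sq_sqrt (Nat.cast_nonneg d)]; ring
    have hbound : ((β : ℝ) - σ β) ^ 2 ≤ (2 * c) ^ 2 := by
      rw [← sq_abs]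
      have : |(β : ℝ)| ≤ c := hσ (Fd d).val
      exact pow_le_pow_left₀ (abs_nonneg _) ((abs_sub _ _).trans (by linarith [hσ σ])) 2
    push_cast at hΔ
    linarith
  obtain rfl : b = 0 := by simpa [hk0] using hk
  obtain ⟨n, rfl⟩ := Rat.exists_eq_intCast_of_isIntegral (q := a) (by simpa [hβa] using hβℝ)
  exact ⟨n, Subtype.ext (by simpa using hβa)⟩

end Fd

theorem sq_le_mul_of_forall_int_nonneg {a b c : ℝ}
    (h : ∀ p q : ℤ, 0 ≤ a * p ^ 2 + 2 * b * (p * q) + c * q ^ 2) : b ^ 2 ≤ a * c := by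
  have hrat : ∀ r : ℚ, 0 ≤ a * ((r : ℝ) * r) + 2 * b * r + c := fun r => by
    have hden : (r.den : ℝ) ≠ 0 := by positivity
    have hnum := h r.num r.den
    push_cast at hnum
    rw [show a * ((r : ℝ) * r) + 2 * b * r + c
      = (a * r.num ^ 2 + 2 * b * (r.num * r.den) + c * r.den ^ 2) / (r.den : ℝ) ^ 2 by
        rw [Rat.cast_def]; field_simp]
    exact div_nonneg hnum (sq_nonneg _)
  have hreal : ∀ x : ℝ, 0 ≤ a * (x * x) + 2 * b * x + c := fun x =>
    Rat.denseRange_cast.induction_on x (isClosed_le continuous_const (by fun_prop)) hrat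
  have := discrim_le_zero hreal
  rw [discrim] at this
  linarith

namespace QuadLattice

variable {d : ℕ} (L : QuadLattice d)

theorem B_zsmul_left (n : ℤ) (x y : L.carrier) : L.B (n • x) y = n • L.B x y :=
  map_zsmul (AddMonoidHom.mk' (L.B · y) fun x₁ x₂ => L.B_add_left x₁ x₂ y) n x

theorem B_add_right (x y z : L.carrier) : L.B x (y + z) = L.B x y + L.B x z := by
  rw [L.B_symm, L.B_add_left, L.B_symm y, L.B_symm z]

theorem B_zsmul_right (n : ℤ) (x y : L.carrier) : L.B x (n • y) = n • L.B x y := by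
  rw [L.B_symm, B_zsmul_left, L.B_symm]

def bilinInt : L.carrier →ₗ[ℤ] L.carrier →ₗ[ℤ] Fd d :=
  LinearMap.mk₂ ℤ L.B L.B_add_left L.B_zsmul_left L.B_add_right L.B_zsmul_right

theorem bilinInt_apply (x y : L.carrier) : L.bilinInt x y = L.B x y := rfl

theorem B_mem_of_mem_span {S : Set L.carrier} {p : Submodule ℤ (Fd d)}
    (h : ∀ v ∈ S, ∀ w ∈ S, L.B v w ∈ p) {x y : L.carrier}
    (hx : x ∈ Submodule.span ℤ S) (hy : y ∈ Submodule.span ℤ S) : L.B x y ∈ p := by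
  refine (Submodule.map₂_le (f := L.bilinInt)).mp ?_ x hx y hy
  rw [Submodule.map₂_span_span, Submodule.span_le]
  rintro _ ⟨v, hv, w, hw, rfl⟩
  exact h v hv w hw

theorem Q_zsmul_add_zsmul (p q : ℤ) (v w : L.carrier) :
    (L.Q (p • v + q • w) : Fd d) = p ^ 2 * L.Q v + 2 * L.B v w * (p * q) + q ^ 2 * L.Q w := by
  simp only [← L.B_self, L.B_add_left, L.B_add_right, L.B_zsmul_left, L.B_zsmul_right,
    L.B_symm w v, zsmul_eq_mul]
  ring

theorem map_Q_nonneg (hpd : L.PosDef) (σ : Fd d →ₐ[ℚ] ℝ) (x : L.carrier) :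
    0 ≤ σ (L.Q x) := by
  rcases eq_or_ne x 0 with rfl | hx
  · simp [← L.B_self, ← bilinInt_apply]
  · exact (hpd x hx σ).le

theorem sq_map_B_le (hpd : L.PosDef) (σ : Fd d →ₐ[ℚ] ℝ) (v w : L.carrier) :
    σ (L.B v w) ^ 2 ≤ σ (L.Q v) * σ (L.Q w) :=
  sq_le_mul_of_forall_int_nonneg fun p q => by
    have := L.map_Q_nonneg hpd σ (p • v + q • w)
    simp only [L.Q_zsmul_add_zsmul, map_add, map_mul, map_pow, map_intCast, map_ofNat] at this
    linarith

end QuadLattice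

/-- **Lemma (Statement 8).** Let `Δ_d > 4·15²`, let `L` be a positive definite
classic quadratic `𝒪_F`-lattice, `S = {v ∈ L : Q(v) ∈ ℤ, 1 ≤ Q(v) ≤ 15}`, and
`L₁` the `ℤ`-submodule of `L` generated by `S`. Then `B(L₁, L₁) ⊆ ℤ`. -/
theorem span_int_valued
    (d : ℕ) (hd : Squarefree d) (hd1 : 1 < d)
    (hΔ : 4 * 15 ^ 2 < Delta d)
    (L : QuadLattice d) (hcl : L.IsClassic) (hpd : L.PosDef)
    (x y : L.carrier)
    (hx : x ∈ Submodule.span ℤ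
      {v : L.carrier | ∃ n : ℤ, (L.Q v : Fd d) = (n : Fd d) ∧ 1 ≤ n ∧ n ≤ 15})
    (hy : y ∈ Submodule.span ℤ
      {v : L.carrier | ∃ n : ℤ, (L.Q v : Fd d) = (n : Fd d) ∧ 1 ≤ n ∧ n ≤ 15}) :
    ∃ n : ℤ, L.B x y = (n : Fd d) := by
  set S := {v : L.carrier | ∃ n : ℤ, (L.Q v : Fd d) = (n : Fd d) ∧ 1 ≤ n ∧ n ≤ 15}
  have hgen : ∀ v ∈ S, ∀ w ∈ S, L.B v w ∈ (1 : Submodule ℤ (Fd d)) := by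
    rintro v ⟨m, hv, hm1, hm15⟩ w ⟨n, hw, hn1, hn15⟩
    have hbound (σ : Fd d →ₐ[ℚ] ℝ) : σ (L.B v w) ^ 2 ≤ 15 ^ 2 :=
      calc σ (L.B v w) ^ 2 ≤ σ (L.Q v) * σ (L.Q w) := L.sq_map_B_le hpd σ v w
        _ = m * n := by simp [hv, hw]
        _ ≤ 15 ^ 2 := by exact_mod_cast (by nlinarith : m * n ≤ 15 ^ 2)
    obtain ⟨k, hk⟩ := Fd.exists_eq_intCast_of_abs_le hd hd1 (hcl v w) (c := 15)
      (by exact_mod_cast hΔ) fun σ => abs_le_of_sq_le_sq (hbound σ) (by norm_num)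
    exact Submodule.mem_one.mpr ⟨k, by simp [hk]⟩
  obtain ⟨n, hn⟩ := Submodule.mem_one.mp (L.B_mem_of_mem_span hgen hx hy)
  exact ⟨n, by simpa using hn.symm⟩
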